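/- arXiv:1202.1084 — 2 statements merged into one kernel-verified Lean document; each statement's English description precedes it below -/
import Mathlib

section
/- Let ζ be a finite nonnegative Radon measure on ℝ² with atomic part A_ζ = Σⱼ ζⱼ δ_{qⱼ}. Then for ζ-almost every x, ⟨ζ − A_ζ, χ_ε(|x − ·|)⟩ → 0 as ε → 0; consequently, for every ψ ∈ C⁰_c(ℝ²), lim_{ε→0} ∫∫ |ψ(x)| χ_ε(|x−y|) dζ(x) dζ(y) = Σⱼ ζⱼ² |ψ(qⱼ)|. -/
open MeasureTheory Real Filter Topology

noncomputable section

lemma aux_meas_countable_support {α : Type*} [MeasurableSpace α] [MeasurableSingletonClass α]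
    {f : α → ℝ} {Q : Set α} (hQ : Q.Countable) (h : ∀ x ∉ Q, f x = 0) : Measurable f := by
  intro A hA
  by_cases h0 : (0 : ℝ) ∈ A
  · have hEq : f ⁻¹' A = (f ⁻¹' A ∩ Q) ∪ Qᶜ := by
      ext x
      simp only [Set.mem_union, Set.mem_inter_iff, Set.mem_preimage, Set.mem_compl_iff]
      constructor
      · intro hx
        by_cases hxQ : x ∈ Q
        · exact Or.inl ⟨hx, hxQ⟩
        · exact Or.inr hxQ
      · rintro (⟨hx, _⟩ | hx)
        · exact hx
        · simpa [h x hx] using h0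
    rw [hEq]
    exact ((hQ.mono Set.inter_subset_right).measurableSet).union hQ.measurableSet.compl
  · have hsub : f ⁻¹' A ⊆ Q := by
      intro x hx
      by_contra hxQ
      rw [Set.mem_preimage, h x hxQ] at hx
      exact h0 hx
    exact (hQ.mono hsub).measurableSet

lemma aux_ball (μ : Measure (ℝ × ℝ)) [IsFiniteMeasure μ] (x : ℝ × ℝ) (c : ℝ) (hc : 0 < c) :
    Tendsto (fun ε : ℝ => (μ (Metric.closedBall x (c * ε))).toReal) (𝓝[>] 0)
      (𝓝 (μ {x}).toReal) := by
  have h1 : Tendsto (fun r : ℝ => μ (Metric.cthickening r {x})) (𝓝 0) (𝓝 (μ {x})) :=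
    tendsto_measure_cthickening_of_isClosed ⟨1, one_pos, measure_ne_top _ _⟩ isClosed_singleton
  have h2 : Tendsto (fun ε : ℝ => c * ε) (𝓝[>] 0) (𝓝 0) := by
    have h := ((continuous_const.mul continuous_id : Continuous fun ε : ℝ => c * ε).tendsto
      (0 : ℝ)).mono_left (nhdsWithin_le_nhds (s := Set.Ioi (0:ℝ)))
    simpa using (show Tendsto (fun ε : ℝ => c * ε) (𝓝[>] 0) (𝓝 (c * 0)) from h)
  have h3 := (ENNReal.tendsto_toReal (measure_ne_top μ {x})).comp (h1.comp h2)
  refine h3.congr' ?_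
  filter_upwards [self_mem_nhdsWithin] with ε hε
  have hε' : (0:ℝ) < ε := hε
  simp only [Function.comp]
  rw [Metric.cthickening_singleton x (by positivity : (0:ℝ) ≤ c * ε)]

lemma aux_integrable (μ : Measure (ℝ × ℝ)) [IsFiniteMeasure μ] {χ : ℝ → ℝ}
    (hχcont : Continuous χ) (hχrange : ∀ t : ℝ, 0 ≤ χ t ∧ χ t ≤ 1) (x : ℝ × ℝ) (ε : ℝ) :
    Integrable (fun y => χ (dist x y / ε)) μ := by
  refine (integrable_const (1 : ℝ)).mono' ?_ (ae_of_all _ fun y => ?_)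
  · exact (hχcont.comp ((continuous_const.dist continuous_id).div_const ε)).aestronglyMeasurable
  · rw [Real.norm_eq_abs, abs_of_nonneg (hχrange _).1]
    exact (hχrange _).2

lemma aux_inner (μ : Measure (ℝ × ℝ)) [IsFiniteMeasure μ] {χ : ℝ → ℝ}
    (hχcont : Continuous χ)
    (hχ1 : ∀ t : ℝ, t ≤ 1 → χ t = 1) (hχ0 : ∀ t : ℝ, 2 ≤ t → χ t = 0)
    (hχrange : ∀ t : ℝ, 0 ≤ χ t ∧ χ t ≤ 1) (x : ℝ × ℝ) :
    Tendsto (fun ε : ℝ => ∫ y, χ (dist x y / ε) ∂μ) (𝓝[>] 0) (𝓝 (μ {x}).toReal) := by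
  refine tendsto_of_tendsto_of_tendsto_of_le_of_le' (aux_ball μ x 1 one_pos)
    (aux_ball μ x 2 two_pos) ?_ ?_
  · filter_upwards [self_mem_nhdsWithin] with ε hε
    have hε' : (0:ℝ) < ε := hε
    have hptw : ∀ y, (Metric.closedBall x (1 * ε)).indicator (fun _ => (1:ℝ)) y
        ≤ χ (dist x y / ε) := by
      intro y
      by_cases hy : y ∈ Metric.closedBall x (1 * ε)
      · rw [Set.indicator_of_mem hy]
        have hd : dist x y ≤ ε := by
          rw [dist_comm]; simpa using hy
        have : dist x y / ε ≤ 1 := (div_le_one hε').mpr hd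
        rw [hχ1 _ this]
      · rw [Set.indicator_of_notMem hy]
        exact (hχrange _).1
    have := integral_mono ((integrable_const (1:ℝ)).indicator measurableSet_closedBall)
      (aux_integrable μ hχcont hχrange x ε) hptw
    rwa [integral_indicator_const (1:ℝ) measurableSet_closedBall, smul_eq_mul, mul_one] at this
  · filter_upwards [self_mem_nhdsWithin] with ε hε
    have hε' : (0:ℝ) < ε := hε
    have hptw : ∀ y, χ (dist x y / ε)
        ≤ (Metric.closedBall x (2 * ε)).indicator (fun _ => (1:ℝ)) y := by
      intro y
      by_cases hy : y ∈ Metric.closedBall x (2 * ε)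
      · rw [Set.indicator_of_mem hy]
        exact (hχrange _).2
      · rw [Set.indicator_of_notMem hy]
        have hd : 2 * ε < dist x y := by
          rw [dist_comm]
          simpa [Metric.mem_closedBall, not_le] using hy
        have : (2:ℝ) ≤ dist x y / ε := (le_div_iff₀ hε').mpr hd.le
        rw [hχ0 _ this]
    have := integral_mono (aux_integrable μ hχcont hχrange x ε)
      ((integrable_const (1:ℝ)).indicator measurableSet_closedBall) hptw
    rwa [integral_indicator_const (1:ℝ) measurableSet_closedBall, smul_eq_mul, mul_one] at this

/-- for a finite nonnegative Radon measure `ζ` on `ℝ²` with atomic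
part `A_ζ = Σⱼ ζⱼ δ_{qⱼ}`, for `ζ`-a.e. `x` the pairing of `ζ − A_ζ` with
`χ_ε(|x − ·|)` tends to `0` as `ε → 0`; consequently for every
`ψ ∈ C⁰_c(ℝ²)`,
`lim_{ε→0} ∫∫ |ψ(x)| χ_ε(|x−y|) dζ(x) dζ(y) = Σⱼ ζⱼ² |ψ(qⱼ)|`. -/
theorem diagonal_concentration_limit
    (ζ : Measure (ℝ × ℝ)) [IsFiniteMeasure ζ]
    (q : ℕ → ℝ × ℝ) (hqinj : Function.Injective q)
    (hatoms : ∀ x : ℝ × ℝ, ζ {x} ≠ 0 → ∃ j, x = q j)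
    (χ : ℝ → ℝ) (hχsmooth : ContDiff ℝ (⊤ : ℕ∞) χ)
    (hχ1 : ∀ t : ℝ, t ≤ 1 → χ t = 1) (hχ0 : ∀ t : ℝ, 2 ≤ t → χ t = 0)
    (hχrange : ∀ t : ℝ, 0 ≤ χ t ∧ χ t ≤ 1) :
    (∀ᵐ x ∂ζ,
      Tendsto
        (fun ε : ℝ =>
          (∫ y, χ (dist x y / ε) ∂ζ) -
            ∑' j, (ζ {q j}).toReal * χ (dist x (q j) / ε))
        (𝓝[>] 0) (𝓝 0)) ∧
    ∀ ψ : (ℝ × ℝ) → ℝ, Continuous ψ → HasCompactSupport ψ →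
      Tendsto
        (fun ε : ℝ => ∫ x, ∫ y, |ψ x| * χ (dist x y / ε) ∂ζ ∂ζ)
        (𝓝[>] 0)
        (𝓝 (∑' j, (ζ {q j}).toReal ^ 2 * |ψ (q j)|)) := by
  have hχcont : Continuous χ := hχsmooth.continuous
  set Q : Set (ℝ × ℝ) := Set.range q with hQdef
  have hQc : Q.Countable := Set.countable_range q
  have hQm : MeasurableSet Q := hQc.measurableSet
  have hζ0 : ∀ x ∉ Q, ζ {x} = 0 := by
    intro x hx
    by_contra h
    obtain ⟨j, rfl⟩ := hatoms x h
    exact hx (Set.mem_range_self j)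
  have hint : ∀ (x : ℝ × ℝ) (ε : ℝ), Integrable (fun y => χ (dist x y / ε)) ζ :=
    fun x ε => aux_integrable ζ hχcont hχrange x ε
  have hsum_eq : ∀ (x : ℝ × ℝ) (ε : ℝ),
      (∑' j, (ζ {q j}).toReal * χ (dist x (q j) / ε)) = ∫ y in Q, χ (dist x y / ε) ∂ζ := by
    intro x ε
    rw [setIntegral_countable _ hQc ((hint x ε).integrableOn)]
    simp only [measureReal_def]
    rw [← (Equiv.ofInjective q hqinj).tsum_eq
      (fun a : Q => (ζ {(a : ℝ × ℝ)}).toReal • χ (dist x (a : ℝ × ℝ) / ε))]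
    exact tsum_congr fun j => by simp [smul_eq_mul]
  have hdiff : ∀ (x : ℝ × ℝ) (ε : ℝ),
      ((∫ y, χ (dist x y / ε) ∂ζ) - ∑' j, (ζ {q j}).toReal * χ (dist x (q j) / ε))
        = ∫ y in Qᶜ, χ (dist x y / ε) ∂ζ := by
    intro x ε
    rw [hsum_eq, ← integral_add_compl hQm (hint x ε)]
    ring
  constructor
  · refine ae_of_all _ fun x => ?_
    have hν : (ζ.restrict Qᶜ) {x} = 0 := by
      rw [Measure.restrict_apply (measurableSet_singleton x)]
      by_cases hx : x ∈ Q
      · rw [Set.singleton_inter_eq_empty.mpr (by simp [hx])]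
        simp
      · rw [Set.inter_eq_left.mpr (Set.singleton_subset_iff.mpr (Set.mem_compl hx))]
        exact hζ0 x hx
    have h := aux_inner (ζ.restrict Qᶜ) hχcont hχ1 hχ0 hχrange x
    rw [hν] at h
    simp only [ENNReal.toReal_zero] at h
    exact h.congr fun ε => (hdiff x ε).symm
  · intro ψ hψc hψs
    obtain ⟨M, hM⟩ := (hψc.abs).bounded_above_of_compact_support hψs.abs
    set M' := max M 0 with hM'def
    have hM' : ∀ x, |ψ x| ≤ M' := fun x => by
      have h := (hM x).trans (le_max_left M 0)
      rwa [Real.norm_eq_abs, abs_abs] at h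
    have hM'0 : (0:ℝ) ≤ M' := le_max_right _ _
    have hintχ_le : ∀ (x : ℝ × ℝ) (ε : ℝ),
        (∫ y, χ (dist x y / ε) ∂ζ) ≤ (ζ Set.univ).toReal := by
      intro x ε
      have h := integral_mono (hint x ε) (integrable_const (1:ℝ)) (fun y => (hχrange _).2)
      simpa [measureReal_def] using h
    have hintχ_nn : ∀ (x : ℝ × ℝ) (ε : ℝ), 0 ≤ ∫ y, χ (dist x y / ε) ∂ζ :=
      fun x ε => integral_nonneg fun y => (hχrange _).1
    have key : Tendsto (fun ε : ℝ => ∫ x, ∫ y, |ψ x| * χ (dist x y / ε) ∂ζ ∂ζ) (𝓝[>] 0)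
        (𝓝 (∫ x, |ψ x| * (ζ {x}).toReal ∂ζ)) := by
      refine tendsto_integral_filter_of_dominated_convergence
        (fun _ => M' * (ζ Set.univ).toReal) ?_ ?_ (integrable_const _) ?_
      · refine Eventually.of_forall fun ε => ?_
        refine (continuous_of_dominated (fun x => ?_) (fun x => ae_of_all _ fun y => ?_)
          (integrable_const M') (ae_of_all _ fun y => ?_)).aestronglyMeasurable
        · exact (continuous_const.mul (hχcont.comp
            ((continuous_const.dist continuous_id).div_const ε))).aestronglyMeasurable
        · have h1 : ‖|ψ x| * χ (dist x y / ε)‖ = |ψ x| * χ (dist x y / ε) := by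
            rw [Real.norm_eq_abs, abs_of_nonneg (mul_nonneg (abs_nonneg _) (hχrange _).1)]
          rw [h1]
          have h2 : |ψ x| * χ (dist x y / ε) ≤ M' * 1 :=
            mul_le_mul (hM' x) (hχrange _).2 (hχrange _).1 hM'0
          simpa using h2
        · exact (hψc.abs).mul
            (hχcont.comp ((continuous_id.dist continuous_const).div_const ε))
      · refine Eventually.of_forall fun ε => ae_of_all _ fun x => ?_
        rw [integral_const_mul, Real.norm_eq_abs, abs_mul, abs_abs,
          abs_of_nonneg (hintχ_nn x ε)]
        exact mul_le_mul (hM' x) (hintχ_le x ε) (hintχ_nn x ε) hM'0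
      · refine ae_of_all _ fun x => ?_
        have h := (aux_inner ζ hχcont hχ1 hχ0 hχrange x).const_mul (|ψ x|)
        exact h.congr fun ε => (integral_const_mul _ _).symm
    have hfmeas : Measurable (fun x => |ψ x| * (ζ {x}).toReal) :=
      aux_meas_countable_support hQc (fun x hx => by rw [hζ0 x hx]; simp)
    have hfint : Integrable (fun x => |ψ x| * (ζ {x}).toReal) ζ := by
      refine (integrable_const (M' * (ζ Set.univ).toReal)).mono'
        hfmeas.aestronglyMeasurable (ae_of_all _ fun x => ?_)
      rw [Real.norm_eq_abs, abs_mul, abs_abs, abs_of_nonneg ENNReal.toReal_nonneg]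
      exact mul_le_mul (hM' x)
        (ENNReal.toReal_mono (measure_ne_top _ _) (measure_mono (Set.subset_univ _)))
        ENNReal.toReal_nonneg hM'0
    have hind : (fun x : ℝ × ℝ => |ψ x| * (ζ {x}).toReal)
        = Q.indicator (fun x => |ψ x| * (ζ {x}).toReal) := by
      symm
      refine Set.indicator_eq_self.mpr ?_
      intro x hx
      simp only [Function.mem_support, ne_eq] at hx
      by_contra hxQ
      exact hx (by rw [hζ0 x hxQ]; simp)
    have hfin : (∑' j, (ζ {q j}).toReal ^ 2 * |ψ (q j)|) = ∫ x, |ψ x| * (ζ {x}).toReal ∂ζ := by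
      calc (∑' j, (ζ {q j}).toReal ^ 2 * |ψ (q j)|)
          = ∑' j, (ζ {q j}).toReal • (|ψ (q j)| * (ζ {q j}).toReal) := by
            exact tsum_congr fun j => by rw [smul_eq_mul]; ring
        _ = ∑' (a : Q), (ζ {(a : ℝ × ℝ)}).toReal • (|ψ (a : ℝ × ℝ)| * (ζ {(a : ℝ × ℝ)}).toReal) := by
            rw [← (Equiv.ofInjective q hqinj).tsum_eq
              (fun a : Q => (ζ {(a : ℝ × ℝ)}).toReal • (|ψ (a : ℝ × ℝ)| * (ζ {(a : ℝ × ℝ)}).toReal))]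
            exact tsum_congr fun j => by simp
        _ = ∫ x in Q, |ψ x| * (ζ {x}).toReal ∂ζ :=
            (setIntegral_countable _ hQc hfint.integrableOn).symm
        _ = ∫ x, |ψ x| * (ζ {x}).toReal ∂ζ := by
            rw [← integral_indicator hQm, ← hind]
    rw [hfin]
    exact key

end
end

section
/- Let Φ: D² → ℝᵐ be a smooth conformal immersion of the unit disc satisfying the isothermic equation ∂_{x₁}[e^{−2λ}∂_{x₂}Φ] + ∂_{x₂}[e^{−2λ}∂_{x₁}Φ] = 0, with conformal factor e^λ and Gauss map n (an (m−2)-vector). Then the following conservation law holds: ∂_{x₁}[(∂_{x₂}n ⌞ e₂)² + |∂_{x₁}λ|² − |∂_{x₂}λ|²] + ∂_{x₂}[2 ∂_{x₁}λ ∂_{x₂}λ] = 0, where e_i = e^{−λ}∂_{x_i}Φ and ⌞ is the interior contraction between multivectors; the symmetric law with x₁ and x₂ exchanged holds as well. -/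
open MeasureTheory Real Filter Topology

noncomputable section

abbrev E2 : Type := EuclideanSpace ℝ (Fin 2)
abbrev E3 : Type := EuclideanSpace ℝ (Fin 3)

def D2 : Set E2 := Metric.ball 0 1

variable {F : Type*} [NormedAddCommGroup F] [NormedSpace ℝ F]

def pd (i : Fin 2) (f : E2 → F) (x : E2) : F :=
  fderiv ℝ f x (EuclideanSpace.single i 1)

lemma isOpen_D2 : IsOpen D2 := Metric.isOpen_ball

lemma D2_mem_nhds {x : E2} (hx : x ∈ D2) : D2 ∈ 𝓝 x := isOpen_D2.mem_nhds hx

lemma pd_congr {f g : E2 → F} {x : E2} (h : f =ᶠ[𝓝 x] g) (i : Fin 2) :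
    pd i f x = pd i g x := by
  unfold pd; rw [h.fderiv_eq]

lemma pd_congr_D2 {f g : E2 → F} {x : E2} (hx : x ∈ D2) (h : ∀ y ∈ D2, f y = g y)
    (i : Fin 2) : pd i f x = pd i g x :=
  pd_congr (eventually_of_mem (D2_mem_nhds hx) h) i

lemma contDiffOn_pd {f : E2 → F} (hf : ContDiffOn ℝ (⊤ : ℕ∞) f D2) (i : Fin 2) :
    ContDiffOn ℝ (⊤ : ℕ∞) (pd i f) D2 := by
  have h1 : ContDiffOn ℝ (⊤ : ℕ∞) (fderiv ℝ f) D2 :=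
    hf.fderiv_of_isOpen isOpen_D2 (by simp)
  exact (ContinuousLinearMap.apply ℝ F (EuclideanSpace.single i 1)).contDiff.comp_contDiffOn h1

lemma contDiffAt_of_D2 {f : E2 → F} (hf : ContDiffOn ℝ (⊤ : ℕ∞) f D2) {x : E2} (hx : x ∈ D2) :
    ContDiffAt ℝ (⊤ : ℕ∞) f x := hf.contDiffAt (D2_mem_nhds hx)

lemma diffAt_of_D2 {f : E2 → F} (hf : ContDiffOn ℝ (⊤ : ℕ∞) f D2) {x : E2} (hx : x ∈ D2) :
    DifferentiableAt ℝ f x := (contDiffAt_of_D2 hf hx).differentiableAt (by simp)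

lemma pd_add {f g : E2 → F} {x : E2} (hf : DifferentiableAt ℝ f x)
    (hg : DifferentiableAt ℝ g x) (i : Fin 2) :
    pd i (fun y => f y + g y) x = pd i f x + pd i g x := by
  unfold pd; rw [fderiv_fun_add hf hg]; rfl

lemma pd_sub {f g : E2 → F} {x : E2} (hf : DifferentiableAt ℝ f x)
    (hg : DifferentiableAt ℝ g x) (i : Fin 2) :
    pd i (fun y => f y - g y) x = pd i f x - pd i g x := by
  unfold pd; rw [fderiv_fun_sub hf hg]; rfl

lemma pd_mul {f g : E2 → ℝ} {x : E2} (hf : DifferentiableAt ℝ f x)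
    (hg : DifferentiableAt ℝ g x) (i : Fin 2) :
    pd i (fun y => f y * g y) x = f x * pd i g x + pd i f x * g x := by
  unfold pd; rw [fderiv_fun_mul hf hg]; simp [mul_comm]

lemma pd_smul {c : E2 → ℝ} {f : E2 → F} {x : E2} (hc : DifferentiableAt ℝ c x)
    (hf : DifferentiableAt ℝ f x) (i : Fin 2) :
    pd i (fun y => c y • f y) x = c x • pd i f x + pd i c x • f x := by
  unfold pd; rw [fderiv_fun_smul hc hf]; simp

lemma pd_inner {f g : E2 → E3} {x : E2} (hf : DifferentiableAt ℝ f x)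
    (hg : DifferentiableAt ℝ g x) (i : Fin 2) :
    pd i (fun y => (inner ℝ (f y) (g y) : ℝ)) x =
      inner ℝ (f x) (pd i g x) + inner ℝ (pd i f x) (g x) := by
  unfold pd; rw [fderiv_inner_apply ℝ hf hg]

lemma pd_exp {c : E2 → ℝ} {x : E2} (hc : DifferentiableAt ℝ c x) (i : Fin 2) :
    pd i (fun y => Real.exp (c y)) x = Real.exp (c x) * pd i c x := by
  unfold pd; rw [fderiv_exp hc]; simp

lemma pd_sq {f : E2 → ℝ} {x : E2} (hf : DifferentiableAt ℝ f x) (i : Fin 2) :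
    pd i (fun y => (f y) ^ 2) x = 2 * f x * pd i f x := by
  have : (fun y => (f y) ^ 2) = fun y => f y * f y := by funext y; ring
  rw [this, pd_mul hf hf]; ring

lemma pd_comm {f : E2 → F} {x : E2} (hf : ContDiffAt ℝ (⊤ : ℕ∞) f x) (i j : Fin 2) :
    pd i (pd j f) x = pd j (pd i f) x := by
  have hd : DifferentiableAt ℝ (fderiv ℝ f) x :=
    (hf.fderiv_right (m := (⊤ : ℕ∞)) (by simp)).differentiableAt (by simp)
  have hsymm := hf.isSymmSndFDerivAt (by rw [minSmoothness_of_isRCLikeNormedField]; exact WithTop.coe_le_coe.mpr le_top)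
  have key : ∀ a b : Fin 2, pd a (pd b f) x =
      fderiv ℝ (fderiv ℝ f) x (EuclideanSpace.single a 1) (EuclideanSpace.single b 1) := by
    intro a b
    have : pd b f = fun y => (fderiv ℝ f y) (EuclideanSpace.single b 1) := rfl
    rw [this]
    unfold pd
    rw [fderiv_clm_apply hd (differentiableAt_const _)]
    simp
  rw [key i j, key j i, hsymm]

lemma pd_const_mul {f : E2 → ℝ} {x : E2} (hf : DifferentiableAt ℝ f x) (c : ℝ) (i : Fin 2) :
    pd i (fun y => c * f y) x = c * pd i f x := by
  unfold pd; rw [fderiv_const_mul hf]; simp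

lemma pd_neg {f : E2 → ℝ} {x : E2} (i : Fin 2) :
    pd i (fun y => -(f y)) x = -(pd i f x) := by
  unfold pd; rw [fderiv_fun_neg]; simp

lemma pd_const (c : F) (x : E2) (i : Fin 2) : pd i (fun _ => c) x = 0 := by
  unfold pd; rw [fderiv_fun_const]; simp

lemma parseval3 {a b g : E3} {r : ℝ} (hr : r ≠ 0)
    (haa : (inner ℝ a a : ℝ) = r ^ 2) (hbb : (inner ℝ b b : ℝ) = r ^ 2)
    (hab : (inner ℝ a b : ℝ) = 0) (hgg : (inner ℝ g g : ℝ) = 1)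
    (hga : (inner ℝ g a : ℝ) = 0) (hgb : (inner ℝ g b : ℝ) = 0) (v w : E3) :
    (inner ℝ v w : ℝ) =
      ((inner ℝ v a : ℝ) * (inner ℝ w a : ℝ) + (inner ℝ v b : ℝ) * (inner ℝ w b : ℝ)) / r ^ 2 +
        (inner ℝ v g : ℝ) * (inner ℝ w g : ℝ) := by
  have horth : Orthonormal ℝ ![r⁻¹ • a, r⁻¹ • b, g] := by
    have h00 : (inner ℝ (r⁻¹ • a) (r⁻¹ • a) : ℝ) = 1 := by
      rw [real_inner_smul_left, real_inner_smul_right, haa]; field_simp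
    have h11 : (inner ℝ (r⁻¹ • b) (r⁻¹ • b) : ℝ) = 1 := by
      rw [real_inner_smul_left, real_inner_smul_right, hbb]; field_simp
    have h22 : (inner ℝ g g : ℝ) = 1 := hgg
    have h01 : (inner ℝ (r⁻¹ • a) (r⁻¹ • b) : ℝ) = 0 := by
      rw [real_inner_smul_left, real_inner_smul_right, hab]; ring
    have h10 : (inner ℝ (r⁻¹ • b) (r⁻¹ • a) : ℝ) = 0 := by
      rw [real_inner_smul_left, real_inner_smul_right, real_inner_comm, hab]; ring
    have h20 : (inner ℝ g (r⁻¹ • a) : ℝ) = 0 := by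
      rw [real_inner_smul_right, hga]; ring
    have h02 : (inner ℝ (r⁻¹ • a) g : ℝ) = 0 := by
      rw [real_inner_smul_left, real_inner_comm, hga]; ring
    have h21 : (inner ℝ g (r⁻¹ • b) : ℝ) = 0 := by
      rw [real_inner_smul_right, hgb]; ring
    have h12 : (inner ℝ (r⁻¹ • b) g : ℝ) = 0 := by
      rw [real_inner_smul_left, real_inner_comm, hgb]; ring
    rw [orthonormal_iff_ite]
    intro i j
    match i, j with
    | 0, 0 => simp only [Matrix.cons_val_zero]; rw [if_pos trivial]; exact h00
    | 0, 1 => simp only [Matrix.cons_val_zero, Matrix.cons_val_one, Matrix.head_cons]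
              rw [if_neg (by decide)]; exact h01
    | 0, 2 => simp only [Matrix.cons_val_zero, Matrix.cons_val_two, Matrix.tail_cons,
                Matrix.head_cons]
              rw [if_neg (by decide)]; exact h02
    | 1, 0 => simp only [Matrix.cons_val_zero, Matrix.cons_val_one, Matrix.head_cons]
              rw [if_neg (by decide)]; exact h10
    | 1, 1 => simp only [Matrix.cons_val_one, Matrix.head_cons]; rw [if_pos trivial]; exact h11
    | 1, 2 => simp only [Matrix.cons_val_one, Matrix.head_cons, Matrix.cons_val_two,
                Matrix.tail_cons]
              rw [if_neg (by decide)]; exact h12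
    | 2, 0 => simp only [Matrix.cons_val_zero, Matrix.cons_val_two, Matrix.tail_cons,
                Matrix.head_cons]
              rw [if_neg (by decide)]; exact h20
    | 2, 1 => simp only [Matrix.cons_val_one, Matrix.head_cons, Matrix.cons_val_two,
                Matrix.tail_cons]
              rw [if_neg (by decide)]; exact h21
    | 2, 2 => simp only [Matrix.cons_val_two, Matrix.tail_cons, Matrix.head_cons]
              rw [if_pos trivial]; exact h22
  have hcard : Fintype.card (Fin 3) = Module.finrank ℝ E3 := by
    simp [finrank_euclideanSpace]
  let B0 := basisOfOrthonormalOfCardEqFinrank horth hcard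
  have hB0 : (B0 : Fin 3 → E3) = ![r⁻¹ • a, r⁻¹ • b, g] :=
    coe_basisOfOrthonormalOfCardEqFinrank horth hcard
  let B : OrthonormalBasis (Fin 3) ℝ E3 := B0.toOrthonormalBasis (by rwa [hB0])
  have hB : ∀ k, B k = ![r⁻¹ • a, r⁻¹ • b, g] k := by
    intro k
    have : ⇑B = ⇑B0 := Module.Basis.coe_toOrthonormalBasis _ _
    rw [this, hB0]
  have hsum := B.sum_inner_mul_inner v w
  rw [Fin.sum_univ_three, hB 0, hB 1, hB 2] at hsum
  simp only [Matrix.cons_val_zero, Matrix.cons_val_one, Matrix.head_cons,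
    Matrix.cons_val_two, Matrix.tail_cons, real_inner_smul_left, real_inner_smul_right] at hsum
  rw [← hsum]
  rw [real_inner_comm a w, real_inner_comm b w, real_inner_comm g w]
  field_simp

lemma key (Φ : E2 → E3) (n : E2 → E3) (lam : E2 → ℝ)
    (hΦ : ContDiffOn ℝ (⊤ : ℕ∞) Φ D2) (hn : ContDiffOn ℝ (⊤ : ℕ∞) n D2)
    (hlam : ContDiffOn ℝ (⊤ : ℕ∞) lam D2)
    (hEE : ∀ k : Fin 2, ∀ x ∈ D2,
      (inner ℝ (pd k Φ x) (pd k Φ x) : ℝ) = Real.exp (2 * lam x))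
    (hFF : ∀ k l : Fin 2, k ≠ l → ∀ x ∈ D2, (inner ℝ (pd k Φ x) (pd l Φ x) : ℝ) = 0)
    (hNN : ∀ x ∈ D2, (inner ℝ (n x) (n x) : ℝ) = 1)
    (hNP : ∀ k : Fin 2, ∀ x ∈ D2, (inner ℝ (n x) (pd k Φ x) : ℝ) = 0)
    (hmix : ∀ k l : Fin 2, k ≠ l → ∀ x ∈ D2,
      pd k (pd l Φ) x = pd k lam x • pd l Φ x + pd l lam x • pd k Φ x)
    (i j : Fin 2) (hij : i ≠ j) :
    ∀ x ∈ D2,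
      pd i (fun y => (inner ℝ (pd j n y) (Real.exp (-(lam y)) • pd j Φ y) : ℝ) ^ 2
          + (pd i lam y) ^ 2 - (pd j lam y) ^ 2) x
        + pd j (fun y => 2 * pd i lam y * pd j lam y) x = 0 := by
  have cP : ∀ k, ContDiffOn ℝ (⊤ : ℕ∞) (pd k Φ) D2 := fun k => contDiffOn_pd hΦ k
  have cPP : ∀ k l, ContDiffOn ℝ (⊤ : ℕ∞) (pd k (pd l Φ)) D2 := fun k l => contDiffOn_pd (cP l) k
  have cL : ∀ k, ContDiffOn ℝ (⊤ : ℕ∞) (pd k lam) D2 := fun k => contDiffOn_pd hlam k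
  have cN : ∀ k, ContDiffOn ℝ (⊤ : ℕ∞) (pd k n) D2 := fun k => contDiffOn_pd hn k
  have dlam : ∀ y ∈ D2, DifferentiableAt ℝ lam y := fun y hy => diffAt_of_D2 hlam hy
  have dn : ∀ y ∈ D2, DifferentiableAt ℝ n y := fun y hy => diffAt_of_D2 hn hy
  have dP : ∀ k, ∀ y ∈ D2, DifferentiableAt ℝ (pd k Φ) y :=
    fun k y hy => diffAt_of_D2 (cP k) hy
  have dPP : ∀ k l, ∀ y ∈ D2, DifferentiableAt ℝ (pd k (pd l Φ)) y :=
    fun k l y hy => diffAt_of_D2 (cPP k l) hy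
  have dL : ∀ k, ∀ y ∈ D2, DifferentiableAt ℝ (pd k lam) y :=
    fun k y hy => diffAt_of_D2 (cL k) hy
  have dN : ∀ k, ∀ y ∈ D2, DifferentiableAt ℝ (pd k n) y :=
    fun k y hy => diffAt_of_D2 (cN k) hy
  -- I1 : tangential diagonal components
  have I1 : ∀ k : Fin 2, ∀ y ∈ D2,
      (inner ℝ (pd k (pd k Φ) y) (pd k Φ y) : ℝ) = pd k lam y * Real.exp (2 * lam y) := by
    intro k y hy
    have h := pd_congr_D2 (f := fun z => (inner ℝ (pd k Φ z) (pd k Φ z) : ℝ))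
      (g := fun z => Real.exp (2 * lam z)) hy (hEE k) k
    rw [pd_inner (dP k y hy) (dP k y hy), pd_exp ((dlam y hy).const_mul 2),
      pd_const_mul (dlam y hy)] at h
    linarith [real_inner_comm (pd k Φ y) (pd k (pd k Φ) y)]
  -- I2 : mixed tangential components of diagonal second derivatives
  have I2 : ∀ k l : Fin 2, k ≠ l → ∀ y ∈ D2,
      (inner ℝ (pd k (pd k Φ) y) (pd l Φ y) : ℝ) = -(pd l lam y * Real.exp (2 * lam y)) := by
    intro k l hkl y hy
    have h := pd_congr_D2 (f := fun z => (inner ℝ (pd k Φ z) (pd l Φ z) : ℝ))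
      (g := fun _ => (0 : ℝ)) hy (hFF k l hkl) k
    rw [pd_inner (dP k y hy) (dP l y hy), pd_const, hmix k l hkl y hy] at h
    simp only [inner_add_right, real_inner_smul_right] at h
    rw [hEE k y hy, hFF k l hkl y hy] at h
    linarith
  -- I3 : derivative of n stays orthogonal to n
  have I3 : ∀ k : Fin 2, ∀ y ∈ D2, (inner ℝ (pd k n y) (n y) : ℝ) = 0 := by
    intro k y hy
    have h := pd_congr_D2 (f := fun z => (inner ℝ (n z) (n z) : ℝ))
      (g := fun _ => (1 : ℝ)) hy hNN k
    rw [pd_inner (dn y hy) (dn y hy), pd_const] at h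
    linarith [real_inner_comm (n y) (pd k n y)]
  -- I4 : components of derivatives of n against tangent vectors
  have I4 : ∀ k l : Fin 2, ∀ y ∈ D2,
      (inner ℝ (pd k n y) (pd l Φ y) : ℝ) = -(inner ℝ (n y) (pd k (pd l Φ) y) : ℝ) := by
    intro k l y hy
    have h := pd_congr_D2 (f := fun z => (inner ℝ (n z) (pd l Φ z) : ℝ))
      (g := fun _ => (0 : ℝ)) hy (hNP l) k
    rw [pd_inner (dn y hy) (dP l y hy), pd_const] at h
    linarith
  have nmix : ∀ k l : Fin 2, k ≠ l → ∀ y ∈ D2,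
      (inner ℝ (n y) (pd k (pd l Φ) y) : ℝ) = 0 := by
    intro k l hkl y hy
    rw [hmix k l hkl y hy]
    simp only [inner_add_right, real_inner_smul_right]
    rw [hNP k y hy, hNP l y hy]; ring
  have I4a : ∀ k l : Fin 2, k ≠ l → ∀ y ∈ D2,
      (inner ℝ (pd k n y) (pd l Φ y) : ℝ) = 0 := by
    intro k l hkl y hy
    rw [I4 k l y hy, nmix k l hkl y hy]; ring
  have I4b : ∀ k : Fin 2, ∀ y ∈ D2,
      (inner ℝ (pd k n y) (pd k Φ y) : ℝ) = -(inner ℝ (n y) (pd k (pd k Φ) y) : ℝ) :=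
    fun k y hy => I4 k k y hy
  -- Parseval at points of D2
  have par : ∀ k l : Fin 2, k ≠ l → ∀ y ∈ D2, ∀ v w : E3,
      (inner ℝ v w : ℝ) =
        ((inner ℝ v (pd k Φ y) : ℝ) * (inner ℝ w (pd k Φ y) : ℝ) +
          (inner ℝ v (pd l Φ y) : ℝ) * (inner ℝ w (pd l Φ y) : ℝ)) / (Real.exp (lam y)) ^ 2 +
          (inner ℝ v (n y) : ℝ) * (inner ℝ w (n y) : ℝ) := by
    intro k l hkl y hy v w
    refine parseval3 (Real.exp_ne_zero _) ?_ ?_ ?_ (hNN y hy) (hNP k y hy) (hNP l y hy) v w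
    · rw [hEE k y hy, two_mul, Real.exp_add, sq]
    · rw [hEE l y hy, two_mul, Real.exp_add, sq]
    · exact hFF k l hkl y hy
  -- Codazzi equation
  have I6 : ∀ k l : Fin 2, k ≠ l → ∀ y ∈ D2,
      pd k (fun z => (inner ℝ (n z) (pd l (pd l Φ) z) : ℝ)) y =
        pd k lam y * ((inner ℝ (n y) (pd k (pd k Φ) y) : ℝ) +
          (inner ℝ (n y) (pd l (pd l Φ) y) : ℝ)) := by
    intro k l hkl y hy
    have e1 : pd k (fun z => (inner ℝ (n z) (pd l (pd l Φ) z) : ℝ)) y =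
        (inner ℝ (n y) (pd k (pd l (pd l Φ)) y) : ℝ) +
          (inner ℝ (pd k n y) (pd l (pd l Φ) y) : ℝ) :=
      pd_inner (dn y hy) (dPP l l y hy) k
    have e2 : pd k (pd l (pd l Φ)) y = pd l (pd k (pd l Φ)) y :=
      pd_comm (contDiffAt_of_D2 (cP l) hy) k l
    have e3 : pd l (pd k (pd l Φ)) y =
        pd l (fun z => pd k lam z • pd l Φ z + pd l lam z • pd k Φ z) y :=
      pd_congr_D2 hy (hmix k l hkl) l
    have e4 : pd l (fun z => pd k lam z • pd l Φ z + pd l lam z • pd k Φ z) y =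
        (pd k lam y • pd l (pd l Φ) y + pd l (pd k lam) y • pd l Φ y) +
          (pd l lam y • pd l (pd k Φ) y + pd l (pd l lam) y • pd k Φ y) := by
      rw [pd_add ((dL k y hy).fun_smul (dP l y hy)) ((dL l y hy).fun_smul (dP k y hy)),
        pd_smul (dL k y hy) (dP l y hy), pd_smul (dL l y hy) (dP k y hy)]
    have e5 : (inner ℝ (n y) (pd k (pd l (pd l Φ)) y) : ℝ) =
        pd k lam y * (inner ℝ (n y) (pd l (pd l Φ) y) : ℝ) := by
      rw [e2, e3, e4]
      simp only [inner_add_right, real_inner_smul_right]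
      rw [hNP l y hy, hNP k y hy, nmix l k hkl.symm y hy]
      ring
    have e6 : (inner ℝ (pd k n y) (pd l (pd l Φ) y) : ℝ) =
        pd k lam y * (inner ℝ (n y) (pd k (pd k Φ) y) : ℝ) := by
      rw [par k l hkl y hy (pd k n y) (pd l (pd l Φ) y), I4b k y hy, I4a k l hkl y hy,
        I3 k y hy, I2 l k hkl.symm y hy, I1 l y hy]
      have hx2 : (Real.exp (lam y)) ^ 2 = Real.exp (2 * lam y) := by
        rw [two_mul, Real.exp_add, sq]
      rw [hx2]
      have := Real.exp_ne_zero (2 * lam y)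
      field_simp
      ring
    rw [e1, e5, e6]; ring
  -- Gauss equation (Liouville form)
  have I7 : ∀ y ∈ D2,
      (inner ℝ (n y) (pd i (pd i Φ) y) : ℝ) * (inner ℝ (n y) (pd j (pd j Φ) y) : ℝ) =
        -((pd i (pd i lam) y + pd j (pd j lam) y) * Real.exp (2 * lam y)) := by
    intro y hy
    have ha := pd_congr_D2 (f := fun z => (inner ℝ (pd i (pd i Φ) z) (pd j Φ z) : ℝ))
      (g := fun z => -(pd j lam z * Real.exp (2 * lam z))) hy (I2 i j hij) j
    rw [pd_inner (dPP i i y hy) (dP j y hy),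
      pd_neg (f := fun z => pd j lam z * Real.exp (2 * lam z)),
      pd_mul (dL j y hy) ((dlam y hy).const_mul 2).exp,
      pd_exp ((dlam y hy).const_mul 2), pd_const_mul (dlam y hy)] at ha
    have hb0 : ∀ z ∈ D2, (inner ℝ (pd i (pd j Φ) z) (pd j Φ z) : ℝ) =
        pd i lam z * Real.exp (2 * lam z) := by
      intro z hz
      rw [hmix i j hij z hz]
      simp only [inner_add_left, real_inner_smul_left]
      rw [hEE j z hz, hFF i j hij z hz]
      ring
    have hb := pd_congr_D2 hy hb0 i
    rw [pd_inner (dPP i j y hy) (dP j y hy),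
      pd_mul (dL i y hy) ((dlam y hy).const_mul 2).exp,
      pd_exp ((dlam y hy).const_mul 2), pd_const_mul (dlam y hy)] at hb
    have hc : pd j (pd i (pd i Φ)) y = pd i (pd i (pd j Φ)) y := by
      have c1 : pd i (pd i (pd j Φ)) y = pd i (pd j (pd i Φ)) y :=
        pd_congr_D2 hy (fun z hz => pd_comm (contDiffAt_of_D2 hΦ hz) i j) i
      have c2 : pd i (pd j (pd i Φ)) y = pd j (pd i (pd i Φ)) y :=
        pd_comm (contDiffAt_of_D2 (cP i) hy) i j
      rw [c1, c2]
    have hd : (inner ℝ (pd i (pd j Φ) y) (pd i (pd j Φ) y) : ℝ) =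
        ((pd i lam y) ^ 2 + (pd j lam y) ^ 2) * Real.exp (2 * lam y) := by
      rw [hmix i j hij y hy]
      simp only [inner_add_left, inner_add_right, real_inner_smul_left, real_inner_smul_right]
      rw [hEE i y hy, hEE j y hy, hFF i j hij y hy, hFF j i hij.symm y hy]
      ring
    have he : (inner ℝ (pd i (pd i Φ) y) (pd j (pd j Φ) y) : ℝ) =
        -((pd i lam y) ^ 2 + (pd j lam y) ^ 2) * Real.exp (2 * lam y) +
          (inner ℝ (n y) (pd i (pd i Φ) y) : ℝ) * (inner ℝ (n y) (pd j (pd j Φ) y) : ℝ) := by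
      rw [par i j hij y hy (pd i (pd i Φ) y) (pd j (pd j Φ) y), I1 i y hy,
        I2 i j hij y hy, I2 j i hij.symm y hy, I1 j y hy,
        real_inner_comm (pd i (pd i Φ) y) (n y), real_inner_comm (pd j (pd j Φ) y) (n y)]
      have hx2 : (Real.exp (lam y)) ^ 2 = Real.exp (2 * lam y) := by
        rw [two_mul, Real.exp_add, sq]
      rw [hx2]
      have := Real.exp_ne_zero (2 * lam y)
      field_simp
      ring
    -- ha : ⟪Pii, Pjj'⟫ + ⟪pd j Pii, Pj⟫ = ...
    -- hb : ⟪Pij, Pij⟫ + ⟪pd i Pij, Pj⟫ = ...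
    rw [hc] at ha
    rw [hd] at hb
    rw [he] at ha
    nlinarith [ha, hb, Real.exp_pos (2 * lam y)]
  -- final computation
  intro x hx
  have hrepl : pd i (fun y => (inner ℝ (pd j n y) (Real.exp (-(lam y)) • pd j Φ y) : ℝ) ^ 2
        + (pd i lam y) ^ 2 - (pd j lam y) ^ 2) x
      = pd i (fun y => (Real.exp (-(lam y)) * (inner ℝ (n y) (pd j (pd j Φ) y) : ℝ)) ^ 2
        + (pd i lam y) ^ 2 - (pd j lam y) ^ 2) x := by
    refine pd_congr_D2 hx (fun z hz => ?_) i
    rw [real_inner_smul_right, I4b j z hz]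
    ring
  rw [hrepl]
  have dHj : DifferentiableAt ℝ (fun y => (inner ℝ (n y) (pd j (pd j Φ) y) : ℝ)) x :=
    (dn x hx).inner ℝ (dPP j j x hx)
  have dE : DifferentiableAt ℝ (fun y => Real.exp (-(lam y))) x := (dlam x hx).neg.exp
  have dprod : DifferentiableAt ℝ
      (fun y => Real.exp (-(lam y)) * (inner ℝ (n y) (pd j (pd j Φ) y) : ℝ)) x := dE.mul dHj
  have dsq : DifferentiableAt ℝ
      (fun y => (Real.exp (-(lam y)) * (inner ℝ (n y) (pd j (pd j Φ) y) : ℝ)) ^ 2) x :=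
    dprod.pow 2
  rw [pd_sub (dsq.fun_add ((dL i x hx).fun_pow 2)) ((dL j x hx).fun_pow 2),
    pd_add dsq ((dL i x hx).fun_pow 2),
    pd_sq dprod, pd_sq (dL i x hx), pd_sq (dL j x hx),
    pd_mul dE dHj, pd_exp (dlam x hx).fun_neg, pd_neg (f := lam),
    I6 i j hij x hx,
    pd_mul ((dL i x hx).const_mul 2) (dL j x hx),
    pd_const_mul (dL i x hx) 2,
    pd_comm (contDiffAt_of_D2 hlam hx) j i]
  have hge : Real.exp (-(lam x)) * Real.exp (-(lam x)) * Real.exp (2 * lam x) = 1 := by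
    rw [← Real.exp_add, ← Real.exp_add, show -(lam x) + -(lam x) + 2 * lam x = 0 by ring,
      Real.exp_zero]
  linear_combination (2 * pd i lam x * Real.exp (-(lam x)) * Real.exp (-(lam x))) * (I7 x hx)
    - (2 * pd i lam x * (pd i (pd i lam) x + pd j (pd j lam) x)) * hge


/-- entropies for isothermic surfaces, codimension one, where the
Gauss map `n` is the unit normal and the contraction `⌞` with a vector is the
inner ℝ product: for a smooth conformal isothermic immersion `Φ : D² → ℝ³`,
with `e_i = e^{−λ}∂_{x_i}Φ`, the conservation laws
`∂₁[(∂₂n ⌞ e₂)² + |∂₁λ|² − |∂₂λ|²] + ∂₂[2 ∂₁λ ∂₂λ] = 0` and the symmetric one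
with `x₁` and `x₂` exchanged hold. -/
theorem entropy_conservation_laws_for_isothermic_immersions
    (Φ : E2 → E3) (n : E2 → E3) (lam : E2 → ℝ)
    (hΦ : ContDiffOn ℝ (⊤ : ℕ∞) Φ D2) (hn : ContDiffOn ℝ (⊤ : ℕ∞) n D2)
    (hlam : ContDiffOn ℝ (⊤ : ℕ∞) lam D2)
    (hconf : ∀ x ∈ D2, inner ℝ (pd 0 Φ x) (pd 1 Φ x) = (0 : ℝ))
    (hconf0 : ∀ x ∈ D2, ‖pd 0 Φ x‖ = Real.exp (lam x))
    (hconf1 : ∀ x ∈ D2, ‖pd 1 Φ x‖ = Real.exp (lam x))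
    (hunit : ∀ x ∈ D2, ‖n x‖ = 1)
    (hperp0 : ∀ x ∈ D2, inner ℝ (n x) (pd 0 Φ x) = (0 : ℝ))
    (hperp1 : ∀ x ∈ D2, inner ℝ (n x) (pd 1 Φ x) = (0 : ℝ))
    (hiso : ∀ x ∈ D2,
      pd 0 (fun y => Real.exp (-2 * lam y) • pd 1 Φ y) x +
        pd 1 (fun y => Real.exp (-2 * lam y) • pd 0 Φ y) x = 0) :
    (∀ x ∈ D2,
      pd 0 (fun y =>
          (inner ℝ (pd 1 n y) (Real.exp (-(lam y)) • pd 1 Φ y) : ℝ) ^ 2 +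
            (pd 0 lam y) ^ 2 - (pd 1 lam y) ^ 2) x +
        pd 1 (fun y => 2 * pd 0 lam y * pd 1 lam y) x = 0) ∧
    (∀ x ∈ D2,
      pd 1 (fun y =>
          (inner ℝ (pd 0 n y) (Real.exp (-(lam y)) • pd 0 Φ y) : ℝ) ^ 2 +
            (pd 1 lam y) ^ 2 - (pd 0 lam y) ^ 2) x +
        pd 0 (fun y => 2 * pd 0 lam y * pd 1 lam y) x = 0) := by
  have hEE : ∀ k : Fin 2, ∀ x ∈ D2,
      (inner ℝ (pd k Φ x) (pd k Φ x) : ℝ) = Real.exp (2 * lam x) := by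
    intro k x hx
    have hnorm : ‖pd k Φ x‖ = Real.exp (lam x) := by
      fin_cases k
      · exact hconf0 x hx
      · exact hconf1 x hx
    rw [real_inner_self_eq_norm_sq, hnorm, two_mul, Real.exp_add, sq]
  have hFF : ∀ k l : Fin 2, k ≠ l → ∀ x ∈ D2, (inner ℝ (pd k Φ x) (pd l Φ x) : ℝ) = 0 := by
    intro k l hkl x hx
    fin_cases k <;> fin_cases l <;> first
      | exact absurd rfl hkl
      | exact hconf x hx
      | (rw [real_inner_comm]; exact hconf x hx)
  have hNN : ∀ x ∈ D2, (inner ℝ (n x) (n x) : ℝ) = 1 := by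
    intro x hx
    rw [real_inner_self_eq_norm_sq, hunit x hx]; norm_num
  have hNP : ∀ k : Fin 2, ∀ x ∈ D2, (inner ℝ (n x) (pd k Φ x) : ℝ) = 0 := by
    intro k x hx
    fin_cases k
    · exact hperp0 x hx
    · exact hperp1 x hx
  have dlam : ∀ y ∈ D2, DifferentiableAt ℝ lam y := fun y hy => diffAt_of_D2 hlam hy
  have dP : ∀ k : Fin 2, ∀ y ∈ D2, DifferentiableAt ℝ (pd k Φ) y :=
    fun k y hy => diffAt_of_D2 (contDiffOn_pd hΦ k) hy
  have hmix01 : ∀ x ∈ D2,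
      pd 0 (pd 1 Φ) x = pd 0 lam x • pd 1 Φ x + pd 1 lam x • pd 0 Φ x := by
    intro x hx
    have h := hiso x hx
    rw [pd_smul (((dlam x hx).const_mul (-2)).exp) (dP 1 x hx),
      pd_smul (((dlam x hx).const_mul (-2)).exp) (dP 0 x hx),
      pd_exp ((dlam x hx).const_mul (-2)), pd_const_mul (dlam x hx) (-2),
      pd_exp ((dlam x hx).const_mul (-2)), pd_const_mul (dlam x hx) (-2),
      pd_comm (contDiffAt_of_D2 hΦ hx) 1 0] at h
    have h2 : (2 * Real.exp (-2 * lam x)) •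
        (pd 0 (pd 1 Φ) x - (pd 0 lam x • pd 1 Φ x + pd 1 lam x • pd 0 Φ x)) = 0 := by
      linear_combination (norm := module) h
    rcases smul_eq_zero.mp h2 with h3 | h3
    · exact absurd h3 (by positivity)
    · exact sub_eq_zero.mp h3
  have hmix : ∀ k l : Fin 2, k ≠ l → ∀ x ∈ D2,
      pd k (pd l Φ) x = pd k lam x • pd l Φ x + pd l lam x • pd k Φ x := by
    intro k l hkl x hx
    fin_cases k <;> fin_cases l <;> first
      | exact absurd rfl hkl
      | exact hmix01 x hx
      | exact (pd_comm (contDiffAt_of_D2 hΦ hx) 1 0).trans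
          ((hmix01 x hx).trans (add_comm _ _))
  constructor
  · exact key Φ n lam hΦ hn hlam hEE hFF hNN hNP hmix 0 1 (by decide)
  · have h := key Φ n lam hΦ hn hlam hEE hFF hNN hNP hmix 1 0 (by decide)
    intro x hx
    have hcomm : (fun y => 2 * pd 1 lam y * pd 0 lam y) =
        (fun y => 2 * pd 0 lam y * pd 1 lam y) := by funext y; ring
    have := h x hx
    rwa [hcomm] at this
end
end
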